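/- arXiv:math/0005208 — 6 statements merged into one kernel-verified Lean document; each statement's English description precedes it below -/
import Mathlib

section
/- Let κ be an uncountable cardinal such that every coloring F of the pairs of ordinals below κ with values in Fin 2 × Fin 2 has a homogeneous set of cardinality κ. Let B₀ and B₁ be complete Boolean algebras each satisfying the κ-chain condition. Then the product forcing satisfies the κ-chain condition: every set A of pairs (p, q) ∈ B₀ × B₁ with p ≠ ⊥ and q ≠ ⊥ that is pairwise incompatible — i.e. for any two distinct (p, q), (p', q') ∈ A either p ⊓ p' = ⊥ or q ⊓ q' = ⊥ — has cardinality strictly less than κ. -/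
/-!
Embed a putative antichain of size `κ` of the product as `a ↦ (p a, q a)` on `κ.ord.ToType`
and colour a pair `a < b` by which of `p a ⊓ p b` and `q a ⊓ q b` vanish. On a homogeneous set
of size `κ`, either the first coordinates are pairwise disjoint, or they are pairwise compatible
and then the second coordinates must be pairwise disjoint. Either way one factor has an antichain
of size `κ`.
-/

open Cardinal

universe u

section

variable {B : Type u} [SemilatticeInf B] [OrderBot B]

open Classical in
noncomputable def meetColor (p q : B) : Fin 2 := if p ⊓ q = ⊥ then 0 else 1

theorem meetColor_eq_zero_iff {p q : B} : meetColor p q = 0 ↔ p ⊓ q = ⊥ := by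
  unfold meetColor
  split_ifs with h <;> simp [h]

theorem mk_lt_of_inf_eq_bot {κ : Cardinal.{u}}
    (hcc : ∀ A : Set B, (∀ p ∈ A, p ≠ ⊥) →
      (∀ p ∈ A, ∀ q ∈ A, p ≠ q → p ⊓ q = ⊥) → #A < κ)
    {ι : Type u} [LinearOrder ι] {g : ι → B} {s : Set ι} (hne : ∀ a ∈ s, g a ≠ ⊥)
    (hdisj : ∀ a ∈ s, ∀ b ∈ s, a < b → g a ⊓ g b = ⊥) : #s < κ := by
  have hpair : s.Pairwise fun a b => g a ⊓ g b = ⊥ := fun a ha b hb hab =>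
    hab.lt_or_gt.elim (hdisj a ha b hb) fun h => (inf_comm (g a) (g b)).trans (hdisj b hb a ha h)
  have hinj : s.InjOn g := fun a ha b hb hab =>
    by_contra fun h => hne a ha (by simpa [hab] using hpair ha hb h)
  rw [← mk_image_eq_of_injOn g s hinj]
  refine hcc _ (by rintro _ ⟨a, ha, rfl⟩; exact hne a ha) ?_
  rintro _ ⟨a, ha, rfl⟩ _ ⟨b, hb, rfl⟩ hab
  exact hpair ha hb (ne_of_apply_ne g hab)

end

theorem product_kappa_cc_general (κ : Cardinal)
    (hpart : ∀ F : κ.ord.ToType → κ.ord.ToType → Fin 2 × Fin 2,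
      ∃ (H : Set κ.ord.ToType) (c : Fin 2 × Fin 2),
        Cardinal.mk H = κ ∧ ∀ a ∈ H, ∀ b ∈ H, a < b → F a b = c)
    (B₀ B₁ : Type) [CompleteBooleanAlgebra B₀] [CompleteBooleanAlgebra B₁]
    (hcc₀ : ∀ A : Set B₀, (∀ p ∈ A, p ≠ ⊥) →
      (∀ p ∈ A, ∀ q ∈ A, p ≠ q → p ⊓ q = ⊥) → Cardinal.mk A < κ)
    (hcc₁ : ∀ A : Set B₁, (∀ q ∈ A, q ≠ ⊥) →
      (∀ p ∈ A, ∀ q ∈ A, p ≠ q → p ⊓ q = ⊥) → Cardinal.mk A < κ) :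
    ∀ A : Set (B₀ × B₁),
      (∀ pq ∈ A, pq.1 ≠ ⊥ ∧ pq.2 ≠ ⊥) →
      (∀ pq ∈ A, ∀ pq' ∈ A, pq ≠ pq' → pq.1 ⊓ pq'.1 = ⊥ ∨ pq.2 ⊓ pq'.2 = ⊥) →
      Cardinal.mk A < κ := by
  intro A hne hanti
  by_contra! hle
  obtain ⟨f⟩ : Nonempty (κ.ord.ToType ↪ A) := by rwa [← le_def, mk_ord_toType]
  let x : κ.ord.ToType → B₀ × B₁ := fun a => f a
  obtain ⟨H, c, hH, hhom⟩ :=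
    hpart fun a b => (meetColor (x a).1 (x b).1, meetColor (x a).2 (x b).2)
  refine hH.not_lt ?_
  by_cases hc : c.1 = 0
  · refine mk_lt_of_inf_eq_bot hcc₀ (g := fun a => (x a).1) (fun a _ => (hne _ (f a).2).1) ?_
    intro a ha b hb hab
    exact meetColor_eq_zero_iff.1 (by rw [← hc, ← hhom a ha b hb hab])
  · refine mk_lt_of_inf_eq_bot hcc₁ (g := fun a => (x a).2) (fun a _ => (hne _ (f a).2).2) ?_
    intro a ha b hb hab
    have hcompat : (x a).1 ⊓ (x b).1 ≠ ⊥ := fun h =>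
      hc (by rw [← hhom a ha b hb hab]; exact meetColor_eq_zero_iff.2 h)
    have hxab : x a ≠ x b := fun h => hab.ne (f.injective (Subtype.coe_injective h))
    exact (hanti _ (f a).2 _ (f b).2 hxab).resolve_left hcompat

/-- If `κ` is an uncountable cardinal with the partition property
`κ → (κ)²_{2×2}` (every coloring of pairs of ordinals below `κ` with values in
`Fin 2 × Fin 2` has a homogeneous set of cardinality `κ`), and `B₀`, `B₁` are
complete Boolean algebras satisfying the `κ`-chain condition, then the product
satisfies the `κ`-chain condition. -/
theorem product_kappa_cc (κ : Cardinal)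
    (hκ : Cardinal.aleph0 < κ)
    (hpart : ∀ F : κ.ord.ToType → κ.ord.ToType → Fin 2 × Fin 2,
      ∃ (H : Set κ.ord.ToType) (c : Fin 2 × Fin 2),
        Cardinal.mk H = κ ∧ ∀ a ∈ H, ∀ b ∈ H, a < b → F a b = c)
    (B₀ B₁ : Type) [CompleteBooleanAlgebra B₀] [CompleteBooleanAlgebra B₁]
    (hcc₀ : ∀ A : Set B₀, (∀ p ∈ A, p ≠ ⊥) →
      (∀ p ∈ A, ∀ q ∈ A, p ≠ q → p ⊓ q = ⊥) → Cardinal.mk A < κ)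
    (hcc₁ : ∀ A : Set B₁, (∀ q ∈ A, q ≠ ⊥) →
      (∀ p ∈ A, ∀ q ∈ A, p ≠ q → p ⊓ q = ⊥) → Cardinal.mk A < κ) :
    ∀ A : Set (B₀ × B₁),
      (∀ pq ∈ A, pq.1 ≠ ⊥ ∧ pq.2 ≠ ⊥) →
      (∀ pq ∈ A, ∀ pq' ∈ A, pq ≠ pq' → pq.1 ⊓ pq'.1 = ⊥ ∨ pq.2 ⊓ pq'.2 = ⊥) →
      Cardinal.mk A < κ :=
  product_kappa_cc_general κ hpart B₀ B₁ hcc₀ hcc₁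
end

section
/- Let κ be a cardinal with κ^{<κ} = κ. Let B be a complete Boolean algebra satisfying the κ-chain condition and let X ⊆ B with |X| ≤ κ. Then there exists a set S ⊆ B with X ⊆ S and |S| ≤ κ which is the carrier of a complete subalgebra of B: ⊥ ∈ S and ⊤ ∈ S, S is closed under complementation, and for every subset T ⊆ S the supremum of T computed in B belongs to S. -/
/-! The `κ`-chain condition makes every supremum the supremum of fewer than `κ` of its terms:
the terms of a maximal disjoint refinement are fewer than `κ`. So it suffices to close `X` under
complements and suprema of fewer than `κ` elements. Iterate this closure step along `κ`, taking
unions of the earlier stages. Every stage has size at most `κ`, since `κ^{<κ} = κ` bounds the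
number of small subsets. By König's theorem `κ^{<κ} = κ` also forces an infinite `κ` to be
regular, so fewer than `κ` elements of the union all appear by some stage, and the union is
closed. For finite `κ` the hypotheses force `κ ≤ 2` and `B = {⊥, ⊤}`. -/

open Cardinal Set

universe u

namespace Cardinal

variable {κ : Cardinal.{u}}

theorem isRegular_of_powerlt_self (hκ : κ ^< κ = κ) (hinf : ℵ₀ ≤ κ) : κ.IsRegular := by
  refine ⟨hinf, not_lt.1 fun hcof => ?_⟩
  exact (hκ ▸ le_powerlt κ hcof).not_gt (lt_power_cof_ord hinf)

theorem le_two_of_powerlt_self (hκ : κ ^< κ = κ) (hfin : κ < ℵ₀) : κ ≤ 2 := by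
  by_contra! h2
  obtain ⟨n, rfl⟩ := lt_aleph0.1 hfin
  have hn : 2 < n := by exact_mod_cast h2
  have hsq := hκ ▸ le_powerlt (n : Cardinal.{u}) (Nat.cast_lt.2 hn)
  rw [power_natCast] at hsq
  have : n ^ 2 ≤ n := by exact_mod_cast hsq
  nlinarith

theorem mk_iUnion_le_of_forall_le {α ι : Type u} (hinf : ℵ₀ ≤ κ) {f : ι → Set α}
    (hι : #ι ≤ κ) (hf : ∀ i, #(f i) ≤ κ) : #(⋃ i, f i) ≤ κ :=
  (mk_iUnion_le f).trans (mul_le_of_le hinf hι (ciSup_le' hf))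

theorem IsRegular.exists_forall_lt_of_mk_lt (hκ : κ.IsRegular) {s : Set κ.ord.ToType}
    (hs : #s < κ) : ∃ w, ∀ v ∈ s, v < w :=
  not_isCofinal_iff.1 fun hcof =>
    (Order.cof_le hcof).not_gt (hs.trans_eq (by rw [Ordinal.cof_toType, hκ.cof_ord]))

theorem IsRegular.exists_le_mk_Iio (hκ : κ.IsRegular) {μ : Cardinal.{u}} (hμ : μ < κ) :
    ∃ w : κ.ord.ToType, μ ≤ #(Iio w) := by
  obtain ⟨f⟩ : Nonempty (μ.ord.ToType ↪ κ.ord.ToType) := by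
    rw [← le_def, mk_ord_toType, mk_ord_toType]; exact hμ.le
  obtain ⟨w, hw⟩ :=
    hκ.exists_forall_lt_of_mk_lt (mk_range_le.trans_lt ((mk_ord_toType μ).trans_lt hμ))
  refine ⟨w, (mk_ord_toType μ).symm.trans_le ⟨⟨fun v => ⟨f v, hw _ (mem_range_self v)⟩, ?_⟩⟩⟩
  exact fun v v' h => f.injective (congrArg Subtype.val h)

theorem mk_setOf_subset_mk_lt_le (hκ : κ ^< κ = κ) (hinf : ℵ₀ ≤ κ) {α : Type u} {s : Set α}
    (hs : #s ≤ κ) : #{t : Set α | t ⊆ s ∧ #t < κ} ≤ κ := by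
  have hreg := isRegular_of_powerlt_self hκ hinf
  have hcover : {t : Set α | t ⊆ s ∧ #t < κ} ⊆
      ⋃ w : κ.ord.ToType, {t | t ⊆ s ∧ #t ≤ #(Iio w)} := fun t ⟨hts, ht⟩ =>
    mem_iUnion.2 ((hreg.exists_le_mk_Iio ht).imp fun _ hw => ⟨hts, hw⟩)
  refine (mk_le_mk_of_subset hcover).trans
    (mk_iUnion_le_of_forall_le hinf (mk_ord_toType κ).le fun w => ?_)
  calc #{t | t ⊆ s ∧ #t ≤ #(Iio w)} ≤ max #s ℵ₀ ^ #(Iio w) := mk_bounded_subset_le s _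
    _ ≤ κ ^ #(Iio w) := power_le_power_right (max_le hs hinf)
    _ ≤ κ ^< κ := le_powerlt κ (by simpa using mk_Iio_lt w (by simp))
    _ = κ := hκ

end Cardinal

section ChainCondition

variable {B : Type u} [CompleteBooleanAlgebra B] {κ : Cardinal.{u}}

theorem exists_pairwiseDisjoint_refinement_sSup_eq (T : Set B) :
    ∃ A : Set B, ⊥ ∉ A ∧ A.PairwiseDisjoint id ∧ (∀ a ∈ A, ∃ t ∈ T, a ≤ t) ∧ sSup A = sSup T := by
  obtain ⟨A, hA⟩ := zorn_subset
    {A : Set B | ⊥ ∉ A ∧ A.PairwiseDisjoint id ∧ ∀ a ∈ A, ∃ t ∈ T, a ≤ t}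
    fun c hc hchain => ⟨⋃₀ c,
      ⟨fun ⟨s, hs, hbot⟩ => (hc hs).1 hbot,
        (hchain.pairwiseDisjoint_sUnion id).2 fun s hs => (hc hs).2.1,
        fun a ⟨s, hs, ha⟩ => (hc hs).2.2 a ha⟩,
      fun _ => subset_sUnion_of_mem⟩
  obtain ⟨hbot, hdisj, hbelow⟩ := hA.prop
  refine ⟨A, hbot, hdisj, hbelow, (sSup_le fun a ha => ?_).antisymm (sSup_le fun t ht => ?_)⟩
  · obtain ⟨t, ht, hat⟩ := hbelow a ha
    exact hat.trans (le_sSup ht)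
  -- otherwise `t \ sSup A` could be added to the maximal family `A`
  by_contra hle
  have hne : t \ sSup A ≠ ⊥ := fun h => hle (sdiff_eq_bot_iff.1 h)
  have hdisj' : ∀ a ∈ A, Disjoint (t \ sSup A) a := fun a ha =>
    disjoint_sdiff_self_left.mono_right (le_sSup ha)
  have hnotin : t \ sSup A ∉ A := fun h => hne (disjoint_self.1 (hdisj' _ h))
  exact hnotin <| hA.mem_of_prop_insert
    ⟨by simpa [hne.symm] using hbot, hdisj.insert fun a ha _ => hdisj' a ha,
      forall_mem_insert.2 ⟨⟨t, ht, sdiff_le⟩, hbelow⟩⟩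

theorem exists_subset_mk_lt_sSup_eq
    (hcc : ∀ A : Set B, ⊥ ∉ A → A.PairwiseDisjoint id → #A < κ) (T : Set B) :
    ∃ T' ⊆ T, #T' < κ ∧ sSup T' = sSup T := by
  obtain ⟨A, hbot, hdisj, hbelow, hsup⟩ := exists_pairwiseDisjoint_refinement_sSup_eq T
  choose! f hfT hf using hbelow
  refine ⟨f '' A, image_subset_iff.2 hfT, mk_image_le.trans_lt (hcc A hbot hdisj),
    (sSup_le_sSup (image_subset_iff.2 hfT)).antisymm ?_⟩
  rw [← hsup]
  exact sSup_le_sSup_of_isCofinalFor fun a ha => ⟨f a, mem_image_of_mem f ha, hf a ha⟩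

theorem eq_bot_or_eq_top_of_chainCondition_le_two (hκ : κ ≤ 2)
    (hcc : ∀ A : Set B, ⊥ ∉ A → A.PairwiseDisjoint id → #A < κ) (b : B) : b = ⊥ ∨ b = ⊤ := by
  by_contra! ⟨hbot, htop⟩
  have hcompl : bᶜ ≠ ⊥ := compl_eq_bot.not.2 htop
  have hne : b ≠ bᶜ := fun h => hbot (by simpa using congrArg (b ⊓ ·) h)
  have hpair := hcc {b, bᶜ} (by simp [hbot.symm, hcompl.symm])
    (pairwise_pair_of_symm.2 fun _ => disjoint_compl_right)
  rw [mk_insert (by simpa using hne), mk_singleton, one_add_one_eq_two] at hpair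
  exact hpair.not_ge hκ

theorem mk_le_of_chainCondition_le_two (hκ : κ ≤ 2)
    (hcc : ∀ A : Set B, ⊥ ∉ A → A.PairwiseDisjoint id → #A < κ) : #B ≤ κ := by
  have hsub : ({⊥}ᶜ : Set B).Subsingleton := fun a ha b hb => by
    rw [(eq_bot_or_eq_top_of_chainCondition_le_two hκ hcc a).resolve_left ha,
      (eq_bot_or_eq_top_of_chainCondition_le_two hκ hcc b).resolve_left hb]
  rw [← mk_sum_compl {⊥}, mk_singleton, add_comm]
  exact add_one_le_of_lt (hcc _ (by simp) (hsub.pairwise _))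

end ChainCondition

section ComplSSupClosure

variable {B : Type u} [SupSet B] [Compl B] (κ : Cardinal.{u})

def complSSupStep (s : Set B) : Set B :=
  s ∪ compl '' s ∪ sSup '' {t | t ⊆ s ∧ #t < κ}

noncomputable def complSSupStage (X : Set B) (w : κ.ord.ToType) : Set B :=
  complSSupStep κ (X ∪ ⋃ v ∈ Iio w, complSSupStage X v)
termination_by w
decreasing_by assumption

def complSSupClosure (X : Set B) : Set B :=
  ⋃ w, complSSupStage κ X w

variable {κ} {X s t : Set B} {x : B}

theorem subset_complSSupStep : s ⊆ complSSupStep κ s :=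
  subset_union_left.trans subset_union_left

theorem compl_mem_complSSupStep (hx : x ∈ s) : xᶜ ∈ complSSupStep κ s :=
  Or.inl (Or.inr (mem_image_of_mem _ hx))

theorem sSup_mem_complSSupStep (hts : t ⊆ s) (ht : #t < κ) : sSup t ∈ complSSupStep κ s :=
  Or.inr (mem_image_of_mem _ ⟨hts, ht⟩)

theorem mk_complSSupStep_le (hκ : κ ^< κ = κ) (hinf : ℵ₀ ≤ κ) (hs : #s ≤ κ) :
    #(complSSupStep κ s) ≤ κ :=
  (mk_union_le _ _).trans <| add_le_of_le hinf
    ((mk_union_le _ _).trans (add_le_of_le hinf hs (mk_image_le.trans hs)))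
    (mk_image_le.trans (mk_setOf_subset_mk_lt_le hκ hinf hs))

theorem complSSupStage_eq (w : κ.ord.ToType) :
    complSSupStage κ X w = complSSupStep κ (X ∪ ⋃ v ∈ Iio w, complSSupStage κ X v) := by
  rw [complSSupStage]

theorem subset_complSSupStage (w : κ.ord.ToType) : X ⊆ complSSupStage κ X w := by
  rw [complSSupStage_eq]
  exact subset_union_left.trans subset_complSSupStep

theorem compl_mem_complSSupStage {v w : κ.ord.ToType} (hvw : v < w)
    (hx : x ∈ complSSupStage κ X v) : xᶜ ∈ complSSupStage κ X w := by
  rw [complSSupStage_eq]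
  exact compl_mem_complSSupStep (Or.inr (mem_biUnion hvw hx))

theorem sSup_mem_complSSupStage {w : κ.ord.ToType}
    (htw : t ⊆ ⋃ v ∈ Iio w, complSSupStage κ X v) (ht : #t < κ) :
    sSup t ∈ complSSupStage κ X w := by
  rw [complSSupStage_eq]
  exact sSup_mem_complSSupStep (htw.trans subset_union_right) ht

theorem mk_complSSupStage_le (hκ : κ ^< κ = κ) (hinf : ℵ₀ ≤ κ) (hX : #X ≤ κ)
    (w : κ.ord.ToType) : #(complSSupStage κ X w) ≤ κ := by
  induction w using WellFoundedLT.induction with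
  | _ w ih =>
    rw [complSSupStage_eq]
    refine mk_complSSupStep_le hκ hinf ((mk_union_le _ _).trans (add_le_of_le hinf hX ?_))
    rw [biUnion_eq_iUnion]
    exact mk_iUnion_le_of_forall_le hinf ((mk_set_le _).trans (mk_ord_toType κ).le)
      fun v => ih v v.2

theorem mk_complSSupClosure_le (hκ : κ ^< κ = κ) (hinf : ℵ₀ ≤ κ) (hX : #X ≤ κ) :
    #(complSSupClosure κ X) ≤ κ :=
  mk_iUnion_le_of_forall_le hinf (mk_ord_toType κ).le (mk_complSSupStage_le hκ hinf hX)

theorem subset_complSSupClosure (hκ : κ ≠ 0) : X ⊆ complSSupClosure κ X := fun _ hx =>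
  have : Nonempty κ.ord.ToType := mk_ne_zero_iff.1 ((mk_ord_toType κ).trans_ne hκ)
  mem_iUnion.2 ⟨Classical.arbitrary _, subset_complSSupStage _ hx⟩

theorem compl_mem_complSSupClosure (hinf : ℵ₀ ≤ κ) (hx : x ∈ complSSupClosure κ X) :
    xᶜ ∈ complSSupClosure κ X := by
  have := Cardinal.noMaxOrder hinf
  obtain ⟨v, hv⟩ := mem_iUnion.1 hx
  obtain ⟨w, hvw⟩ := exists_gt v
  exact mem_iUnion.2 ⟨w, compl_mem_complSSupStage hvw hv⟩

theorem sSup_mem_complSSupClosure (hκ : κ.IsRegular) (htX : t ⊆ complSSupClosure κ X)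
    (ht : #t < κ) : sSup t ∈ complSSupClosure κ X := by
  choose stage hstage using fun x : t => mem_iUnion.1 (htX x.2)
  obtain ⟨w, hw⟩ := hκ.exists_forall_lt_of_mk_lt (mk_range_le.trans_lt ht)
  exact mem_iUnion.2 ⟨w, sSup_mem_complSSupStage
    (fun x hx => mem_biUnion (hw _ (mem_range_self ⟨x, hx⟩)) (hstage ⟨x, hx⟩)) ht⟩

end ComplSSupClosure

/-- If `κ` is a cardinal with `κ^{<κ} = κ`, `B` is a complete Boolean algebra
with the `κ`-chain condition and `X ⊆ B` has cardinality `≤ κ`, then `X` is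
contained in (the carrier of) a complete subalgebra of `B` of cardinality `≤ κ`. -/
theorem small_complete_subalgebra (κ : Cardinal)
    (hκ : κ ^< κ = κ)
    (B : Type) [CompleteBooleanAlgebra B]
    (hcc : ∀ A : Set B, (∀ p ∈ A, p ≠ ⊥) →
      (∀ p ∈ A, ∀ q ∈ A, p ≠ q → p ⊓ q = ⊥) → Cardinal.mk A < κ)
    (X : Set B) (hX : Cardinal.mk X ≤ κ) :
    ∃ S : Set B, X ⊆ S ∧ Cardinal.mk S ≤ κ ∧ ⊥ ∈ S ∧ ⊤ ∈ S ∧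
      (∀ x ∈ S, xᶜ ∈ S) ∧ ∀ T : Set B, T ⊆ S → sSup T ∈ S := by
  have hcc' : ∀ A : Set B, ⊥ ∉ A → A.PairwiseDisjoint id → #A < κ := fun A hbot hdisj =>
    hcc A (fun _ hp hp0 => hbot (hp0 ▸ hp)) fun _ hp _ hq hpq => (hdisj hp hq hpq).eq_bot
  rcases lt_or_ge κ ℵ₀ with hfin | hinf
  · have hB : #B ≤ κ := mk_le_of_chainCondition_le_two (le_two_of_powerlt_self hκ hfin) hcc'
    exact ⟨univ, subset_univ X, mk_univ.trans_le hB, trivial, trivial, fun _ _ => trivial,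
      fun _ _ => trivial⟩
  have hreg := isRegular_of_powerlt_self hκ hinf
  have hsSup : ∀ T ⊆ complSSupClosure κ X, sSup T ∈ complSSupClosure κ X := fun T hT => by
    obtain ⟨T', hT'T, hT', hsup⟩ := exists_subset_mk_lt_sSup_eq hcc' T
    exact hsup ▸ sSup_mem_complSSupClosure hreg (hT'T.trans hT) hT'
  have hbot : ⊥ ∈ complSSupClosure κ X := sSup_empty (α := B) ▸ hsSup ∅ (empty_subset _)
  refine ⟨complSSupClosure κ X, subset_complSSupClosure hreg.ne_zero,
    mk_complSSupClosure_le hκ hinf hX, hbot, ?_, fun _ => compl_mem_complSSupClosure hinf, hsSup⟩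
  simpa using compl_mem_complSSupClosure hinf hbot
end

section
/- Let F be a coloring assigning to each pair of countable ordinals β < γ < ω₁ a value F(β,γ) ∈ Fin 2, and let h : ω₁ → Fin 2. Suppose that for every α < ω₁ the set A_α = {γ < ω₁ : α < γ and F(β,γ) = h(β) for all β < α} has cardinality ℵ₁. Then there exist a set H ⊆ ω₁ of cardinality ℵ₁ and a value i ∈ Fin 2 such that F(α,β) = i for all α < β with α, β ∈ H. -/
/-!
The sets `A_α` decrease as `α` grows and are nonempty, so by pigeonhole some colour `i` is
taken by `h` on every `A_α`. Call a set good if `h ≡ i` on it and `F ≡ i` on its increasing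
pairs. By Zorn there is a maximal good set, and it is uncountable: a countable set is bounded
by some `b < ω₁` because `ω₁` has uncountable cofinality, and any `γ ∈ A_b` with `h γ = i` can
be put on top of it, since `F β γ = h β = i` for its elements `β < b`.
-/

open Cardinal Set

theorem exists_forall_exists_mem_of_antitone {α β C : Type*} [Preorder α] [IsDirectedOrder α]
    [Nonempty α] [Finite C] {A : α → Set β} (hA : Antitone A) (hne : ∀ a, (A a).Nonempty)
    (h : β → C) : ∃ c, ∀ a, ∃ x ∈ A a, h x = c := by
  by_contra! hmiss
  choose bound hbound using hmiss
  obtain ⟨M, hM⟩ := Finite.exists_le bound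
  obtain ⟨x, hx⟩ := hne M
  exact hbound (h x) x (hA (hM _) hx) rfl

theorem exists_gt_of_countable_of_aleph0_lt_cof {α : Type*} [LinearOrder α]
    (hα : ℵ₀ < Order.cof α) {s : Set α} (hs : s.Countable) : ∃ b, ∀ x ∈ s, x < b :=
  not_isCofinal_iff.1 fun hcof =>
    (hα.trans_le (Order.cof_le hcof)).not_ge (le_aleph0_iff_set_countable.2 hs)

theorem aleph0_lt_cof_omega_one : ℵ₀ < Order.cof (aleph 1).ord.ToType := by
  rw [Ordinal.cof_toType, ord_aleph, cof_omega_one]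
  exact aleph0_lt_aleph_one

theorem exists_uncountable_pairwise_of_forall_exists_gt {α : Type*} [LinearOrder α]
    (hα : ℵ₀ < Order.cof α) (Q : α → Prop) (r : α → α → Prop)
    (hext : ∀ b, ∃ c, b < c ∧ Q c ∧ ∀ a < b, Q a → r a c) :
    ∃ H : Set α, ¬H.Countable ∧ H.Pairwise fun a b => a < b → r a b := by
  set S : Set (Set α) := {H | (∀ a ∈ H, Q a) ∧ H.Pairwise fun a b => a < b → r a b}
  obtain ⟨H, hHS, hHmax⟩ : ∃ H, Maximal (· ∈ S) H := by
    refine zorn_subset S fun c hcS hc => ⟨⋃₀ c, ⟨?_, ?_⟩, fun s => subset_sUnion_of_mem⟩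
    · rintro a ⟨s, hs, ha⟩
      exact (hcS hs).1 a ha
    · exact (pairwise_sUnion hc.directedOn).2 fun s hs => (hcS hs).2
  refine ⟨H, fun hH => ?_, hHS.2⟩
  obtain ⟨b, hb⟩ := exists_gt_of_countable_of_aleph0_lt_cof hα hH
  obtain ⟨c, hbc, hQc, hrc⟩ := hext b
  have hinsert : insert c H ∈ S := by
    refine ⟨forall_mem_insert.2 ⟨hQc, hHS.1⟩, pairwise_insert.2 ⟨hHS.2, fun a ha _ => ?_⟩⟩
    have hac : a < c := (hb a ha).trans hbc
    exact ⟨fun hca => absurd hca hac.not_gt, fun _ => hrc a (hb a ha) (hHS.1 a ha)⟩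
  have hc : c ∈ H := hHmax hinsert (subset_insert c H) (mem_insert c H)
  exact ((hb c hc).trans hbc).false

theorem mk_eq_aleph_one_of_not_countable {α : Type*} (hα : #α = ℵ₁) {H : Set α}
    (hH : ¬H.Countable) : #H = ℵ₁ :=
  le_antisymm ((mk_set_le H).trans_eq hα)
    (aleph_one_le_iff.2 (lt_of_not_ge (mt le_aleph0_iff_set_countable.1 hH)))

/-- If `F` is a `2`-coloring of pairs of countable ordinals, `h : ω₁ → Fin 2`,
and for every `α < ω₁` the set of `γ > α` such that `F β γ = h β` for all
`β < α` has cardinality `ℵ₁`, then `F` has a homogeneous set of cardinality `ℵ₁`. -/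
theorem homogeneous_set_from_branch
    (F : (Cardinal.aleph 1).ord.ToType → (Cardinal.aleph 1).ord.ToType → Fin 2)
    (h : (Cardinal.aleph 1).ord.ToType → Fin 2)
    (hA : ∀ α : (Cardinal.aleph 1).ord.ToType,
      Cardinal.mk {γ : (Cardinal.aleph 1).ord.ToType | α < γ ∧ ∀ β < α, F β γ = h β}
        = Cardinal.aleph 1) :
    ∃ (H : Set (Cardinal.aleph 1).ord.ToType) (i : Fin 2),
      Cardinal.mk H = Cardinal.aleph 1 ∧
      ∀ α ∈ H, ∀ β ∈ H, α < β → F α β = i := by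
  have := nonempty_ord_toType (aleph_pos 1).ne'
  have hanti : Antitone fun α => {γ | α < γ ∧ ∀ β < α, F β γ = h β} :=
    fun α α' hαα' γ hγ => ⟨hαα'.trans_lt hγ.1, fun β hβ => hγ.2 β (hβ.trans_le hαα')⟩
  have hne : ∀ α, {γ | α < γ ∧ ∀ β < α, F β γ = h β}.Nonempty := fun α =>
    nonempty_coe_sort.1 (mk_ne_zero_iff.1 ((hA α).trans_ne (aleph_pos 1).ne'))
  obtain ⟨i, hi⟩ := exists_forall_exists_mem_of_antitone hanti hne h
  obtain ⟨H, hHunc, hHhom⟩ := exists_uncountable_pairwise_of_forall_exists_gt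
    aleph0_lt_cof_omega_one (h · = i) (F · · = i) fun b => by
      obtain ⟨γ, ⟨hbγ, hγ⟩, hγi⟩ := hi b
      exact ⟨γ, hbγ, hγi, fun a hab hai => (hγ a hab).trans hai⟩
  exact ⟨H, i, mk_eq_aleph_one_of_not_countable (mk_ord_toType _) hHunc,
    fun α hα β hβ hαβ => hHhom hα hβ hαβ.ne hαβ⟩
end

section
/- Let F be a coloring assigning to each pair of countable ordinals β < γ < ω₁ a value F(β,γ) ∈ ℕ, and let h : ω₁ → ℕ. Suppose that for every α < ω₁ the set A_α = {γ < ω₁ : α < γ and F(β,γ) = h(β) for all β < α} has cardinality ℵ₁. Then there exist a set H ⊆ ω₁ of cardinality ℵ₁ and a value i ∈ ℕ such that F(α,β) = i for all α < β with α, β ∈ H. -/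
/-!
By transfinite recursion build a strictly increasing `f : ω₁ → ω₁` with
`F (f β) (f α) = h (f β)` for `β < α`: at stage `α` the countably many earlier values are
bounded by some `c < ω₁` (as `ω₁` is regular), and any element of `A_c` can serve as `f α`.
The map `h ∘ f` into `ℕ` has an uncountable fiber `{α | h (f α) = i}`, and its image under `f`
is homogeneous of colour `i`.
-/

open Cardinal Set

local notation "Ω" => Ordinal.ToType (Cardinal.ord (Cardinal.aleph 1))

theorem Order.exists_forall_lt_of_mk_lt_cof {α : Type*} [LinearOrder α] {s : Set α}
    (hs : #s < Order.cof α) : ∃ x, ∀ y ∈ s, y < x :=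
  not_isCofinal_iff.mp fun hc => (Order.cof_le hc).not_gt hs

theorem exists_forall_lt_of_countable {s : Set Ω} (hs : s.Countable) : ∃ x, ∀ y ∈ s, y < x := by
  refine Order.exists_forall_lt_of_mk_lt_cof ?_
  rwa [Ordinal.cof_toType, isRegular_aleph_one.cof_ord, lt_aleph_one_iff,
    le_aleph0_iff_set_countable]

theorem countable_Iio (x : Ω) : (Iio x).Countable := by
  rw [← le_aleph0_iff_set_countable, ← lt_aleph_one_iff]
  simpa using mk_Iio_lt x

instance : Uncountable Ω := by
  rw [← aleph0_lt_mk_iff, mk_ord_toType]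
  exact aleph0_lt_aleph_one

theorem mk_eq_aleph_one_of_not_countable_s4 {s : Set Ω} (hs : ¬ s.Countable) : #s = ℵ₁ := by
  refine (mk_set_le s).trans_eq (mk_ord_toType _) |>.antisymm ?_
  rwa [← le_aleph0_iff_set_countable, ← lt_aleph_one_iff, not_lt] at hs

theorem exists_not_countable_fiber {α β : Type*} [Countable α] [Uncountable β] (f : β → α) :
    ∃ a, ¬ (f ⁻¹' {a}).Countable := by
  by_contra! h
  refine not_countable_univ (α := β) ?_
  simpa [← preimage_iUnion, iUnion_of_singleton] using countable_iUnion h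

theorem WellFoundedLT.exists_forall_rel_of_lt {ι X : Type*} [LT ι] [WellFoundedLT ι]
    (R : X → X → Prop) (hR : ∀ i (g : ∀ j : ι, j < i → X), ∃ x, ∀ j hj, R (g j hj) x) :
    ∃ f : ι → X, ∀ i j, j < i → R (f j) (f i) := by
  choose step hstep using hR
  refine ⟨WellFoundedLT.fix step, fun i j hji => ?_⟩
  rw [WellFoundedLT.fix_eq step i]
  exact hstep i (fun j _ => WellFoundedLT.fix step j) j hji

theorem exists_strictMono_branch {C : Type*} (F : Ω → Ω → C) (h : Ω → C)
    (hA : ∀ α : Ω, ∃ γ, α < γ ∧ ∀ β < α, F β γ = h β) :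
    ∃ f : Ω → Ω, StrictMono f ∧ ∀ β α, β < α → F (f β) (f α) = h (f β) := by
  suffices ∃ f : Ω → Ω, ∀ α β, β < α → f β < f α ∧ F (f β) (f α) = h (f β) by
    obtain ⟨f, hf⟩ := this
    exact ⟨f, fun β α hβα => (hf α β hβα).1, fun β α hβα => (hf α β hβα).2⟩
  refine WellFoundedLT.exists_forall_rel_of_lt (fun x y => x < y ∧ F x y = h x) fun α g => ?_
  have : Countable (Iio α) := (countable_Iio α).to_subtype
  obtain ⟨c, hc⟩ := exists_forall_lt_of_countable (countable_range fun b : Iio α => g b b.2)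
  obtain ⟨γ, hcγ, hγ⟩ := hA c
  have hgc (β) (hβ : β < α) : g β hβ < c := hc _ ⟨⟨β, hβ⟩, rfl⟩
  exact ⟨γ, fun β hβ => ⟨(hgc β hβ).trans hcγ, hγ _ (hgc β hβ)⟩⟩

/-- If `F` is an `ℕ`-coloring of pairs of countable ordinals, `h : ω₁ → ℕ`,
and for every `α < ω₁` the set of `γ > α` such that `F β γ = h β` for all
`β < α` has cardinality `ℵ₁`, then `F` has a homogeneous set of cardinality `ℵ₁`. -/
theorem homogeneous_set_from_branch_nat
    (F : (Cardinal.aleph 1).ord.ToType → (Cardinal.aleph 1).ord.ToType → ℕ)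
    (h : (Cardinal.aleph 1).ord.ToType → ℕ)
    (hA : ∀ α : (Cardinal.aleph 1).ord.ToType,
      Cardinal.mk {γ : (Cardinal.aleph 1).ord.ToType | α < γ ∧ ∀ β < α, F β γ = h β}
        = Cardinal.aleph 1) :
    ∃ (H : Set (Cardinal.aleph 1).ord.ToType) (i : ℕ),
      Cardinal.mk H = Cardinal.aleph 1 ∧
      ∀ α ∈ H, ∀ β ∈ H, α < β → F α β = i := by
  have hA_nonempty (α : Ω) : ∃ γ, α < γ ∧ ∀ β < α, F β γ = h β :=
    mk_set_ne_zero_iff.mp ((hA α).trans_ne (aleph_pos 1).ne')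
  obtain ⟨f, hf_mono, hf⟩ := exists_strictMono_branch F h hA_nonempty
  obtain ⟨i, hi⟩ := exists_not_countable_fiber (h ∘ f)
  refine ⟨f '' (h ∘ f ⁻¹' {i}), i, ?_, ?_⟩
  · rw [mk_image_eq hf_mono.injective, mk_eq_aleph_one_of_not_countable_s4 hi]
  · rintro _ ⟨β, hβ, rfl⟩ _ ⟨α, -, rfl⟩ hβα
    rw [hf β α (hf_mono.lt_iff_lt.mp hβα)]
    exact hβ
end

section
/- Let κ be a regular uncountable cardinal such that every coloring F of the pairs of ordinals below κ with values in Fin 2 has a homogeneous set of cardinality κ. Let <_T be a partial order on the set of ordinals below κ such that for every t < κ the set of <_T-predecessors of t is well-ordered by <_T; for α < κ let T_α (the α-th level) be the set of t < κ whose set of <_T-predecessors has order type α under <_T. Assume that every level T_α has cardinality < κ and that T_α is nonempty for every α < κ. Then there is a set B ⊆ κ that is linearly ordered by <_T and intersects every level T_α for α < κ (a cofinal branch). -/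
/-!
Order the tree lexicographically: incomparable nodes are compared, as ordinals, at the nodes
where their branches split. Colour a pair `a < b` by whether this lexicographic order agrees
with the ordinal order, and let `H` be homogeneous of size `κ`. The branch consists of the nodes
with `κ` many elements of `H` above them. Two incomparable such nodes `x, y` would have cones in
`H` that are unbounded in `κ`, so `H` would contain pairs `a < b` with `a` above `y`, `b` above
`x`, and also pairs with `a` above `x`, `b` above `y`; the lexicographic order compares these two
kinds of pairs oppositely, contradicting homogeneity. The branch meets level `α` by pigeonhole:
by regularity fewer than `κ` nodes have height `≤ α`, so `κ` elements of `H` lie above some of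
the fewer than `κ` nodes of level `α`.
-/

open Cardinal Set Relation

universe u

namespace Cardinal

theorem mk_preimage_Iic_lt_of_isRegular {X : Type u} {κ : Cardinal.{u}} (hκ : κ.IsRegular)
    {f : X → Ordinal.{u}} (hf : ∀ β < κ.ord, #(f ⁻¹' {β}) < κ) {α : Ordinal.{u}}
    (hα : α < κ.ord) : #(f ⁻¹' Iic α) < κ := by
  have hsucc : Order.succ α < κ.ord := (isSuccLimit_ord hκ.aleph0_le).succ_lt hα
  have hsub : f ⁻¹' Iic α ⊆ ⋃ i : (Order.succ α).ToType, f ⁻¹' {(Ordinal.ToType.mk.symm i).1} :=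
    fun t ht => mem_iUnion.2 ⟨Ordinal.ToType.mk ⟨f t, mem_Iio.2 (Order.lt_succ_of_le ht)⟩, by simp⟩
  refine (mk_le_mk_of_subset hsub).trans_lt ((card_iUnion_lt_iff_forall_of_isRegular hκ ?_).2
    fun i => hf _ ((Ordinal.ToType.mk.symm i).2.trans hsucc))
  rwa [mk_toType, ← lt_ord]

theorem le_mk_diff_of_mk_lt {X : Type u} {κ : Cardinal.{u}} (hκ : ℵ₀ ≤ κ) {S T : Set X}
    (hS : κ ≤ #S) (hT : #T < κ) : κ ≤ #(S \ T : Set X) := by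
  by_contra! h
  exact (hS.trans (le_mk_sdiff_add_mk S T)).not_gt (add_lt_of_lt hκ h hT)

theorem exists_gt_of_le_mk {κ : Cardinal} (hκ : ℵ₀ ≤ κ) {S : Set κ.ord.ToType} (hS : κ ≤ #S)
    (z : κ.ord.ToType) : ∃ s ∈ S, z < s := by
  by_contra! h
  have hIic : #(Iic z) < κ := by simpa using mk_Iic_lt z (by simp) (by simpa using hκ)
  exact (hS.trans (mk_le_mk_of_subset h)).not_gt hIic

end Cardinal

class IsTreeOrder (α : Type*) (r : α → α → Prop) : Prop extends IsStrictOrder α r where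
  wellOrder_Iio : ∀ t, IsWellOrder {s // r s t} (fun a b => r a.1 b.1)

namespace IsTreeOrder

attribute [instance] wellOrder_Iio

variable {α : Type u} {r : α → α → Prop} [IsTreeOrder α r]

theorem trichotomous_of_reflGen {a b c : α} (ha : ReflGen r a c) (hb : ReflGen r b c) :
    r a b ∨ a = b ∨ r b a := by
  rcases ha with _ | ha
  · rcases hb with _ | hb
    · exact Or.inr (Or.inl rfl)
    · exact Or.inr (Or.inr hb)
  · rcases hb with _ | hb
    · exact Or.inl ha
    · simpa only [Subtype.mk.injEq] using
        trichotomous_of (fun a b : {s // r s c} => r a.1 b.1) ⟨a, ha⟩ ⟨b, hb⟩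

variable (r) in
/-- `d` is the `r`-least node below `x` that is not below `y`, i.e. the node where the branch
to `x` leaves the branch to `y`. -/
def IsSplitPoint (x y d : α) : Prop :=
  ReflGen r d x ∧ ¬ ReflGen r d y ∧ ∀ s, r s d → ReflGen r s y

theorem exists_isSplitPoint {x y : α} (hxy : ¬ ReflGen r x y) : ∃ d, IsSplitPoint r x y d := by
  by_cases hS : ∃ s, r s x ∧ ¬ ReflGen r s y
  · obtain ⟨s, hsx, hsy⟩ := hS
    obtain ⟨⟨d, hdx⟩, hdy, hmin⟩ := (wellOrder_Iio (r := r) x).wf.has_min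
      {s : {s // r s x} | ¬ ReflGen r s.1 y} ⟨⟨s, hsx⟩, hsy⟩
    refine ⟨d, .single hdx, hdy, fun s hsd => ?_⟩
    by_contra hsy
    exact hmin ⟨s, _root_.trans hsd hdx⟩ hsy hsd
  · push Not at hS
    exact ⟨x, .refl, hxy, hS⟩

theorem IsSplitPoint.not_reflGen {x y d : α} (hd : IsSplitPoint r x y d) : ¬ ReflGen r x y :=
  fun hxy => hd.2.1 (_root_.trans hd.1 hxy)

theorem IsSplitPoint.unique {x y d d' : α} (hd : IsSplitPoint r x y d)
    (hd' : IsSplitPoint r x y d') : d = d' := by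
  rcases trichotomous_of_reflGen hd.1 hd'.1 with h | h | h
  · exact absurd (hd'.2.2 d h) hd.2.1
  · exact h
  · exact absurd (hd.2.2 d' h) hd'.2.1

theorem IsSplitPoint.of_reflGen {u v a b d : α} (hd : IsSplitPoint r u v d)
    (hua : ReflGen r u a) (hvb : ReflGen r v b) (hvu : ¬ ReflGen r v u) :
    IsSplitPoint r a b d := by
  obtain ⟨hdu, hdv, hpred⟩ := hd
  refine ⟨_root_.trans hdu hua, fun hdb => ?_, fun s hs => _root_.trans (hpred s hs) hvb⟩
  rcases trichotomous_of_reflGen hdb hvb with h | rfl | h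
  · exact hdv (.single h)
  · exact hdv .refl
  · exact hvu (_root_.trans (ReflGen.single h) hdu)

section Lex

variable [LinearOrder α]

variable (r) in
/-- The lexicographic order of the tree: incomparable nodes are compared, in the linear order
of `α`, by the nodes where their branches split. -/
def TreeLex (x y : α) : Prop :=
  r x y ∨ ∃ d e, IsSplitPoint r x y d ∧ IsSplitPoint r y x e ∧ d < e

theorem TreeLex.total {x y : α} (hxy : x ≠ y) : TreeLex r x y ∨ TreeLex r y x := by
  by_cases h : r x y
  · exact Or.inl (Or.inl h)
  by_cases h' : r y x
  · exact Or.inr (Or.inl h')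
  obtain ⟨d, hd⟩ := exists_isSplitPoint (r := r) (x := x) (y := y) (by
    rintro (_ | h''); exacts [hxy rfl, h h''])
  obtain ⟨e, he⟩ := exists_isSplitPoint (r := r) (x := y) (y := x) (by
    rintro (_ | h''); exacts [hxy rfl, h' h''])
  have hde : d ≠ e := by rintro rfl; exact he.2.1 hd.1
  rcases hde.lt_or_gt with hlt | hlt
  · exact Or.inl (Or.inr ⟨d, e, hd, he, hlt⟩)
  · exact Or.inr (Or.inr ⟨e, d, he, hd, hlt⟩)

theorem TreeLex.asymm {x y : α} (hxy : TreeLex r x y) : ¬ TreeLex r y x := by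
  rintro (hyx | ⟨d', e', hd', he', hlt'⟩)
  · rcases hxy with hxy | ⟨-, e, -, he, -⟩
    · exact irrefl x (_root_.trans hxy hyx)
    · exact he.not_reflGen (.single hyx)
  · rcases hxy with hxy | ⟨d, e, hd, he, hlt⟩
    · exact he'.not_reflGen (.single hxy)
    · rw [hd.unique he', he.unique hd'] at hlt
      exact lt_asymm hlt hlt'

theorem TreeLex.of_reflGen {u v a b : α} (h : TreeLex r u v) (hua : ReflGen r u a)
    (hvb : ReflGen r v b) (huv : ¬ ReflGen r u v) (hvu : ¬ ReflGen r v u) : TreeLex r a b := by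
  rcases h with h | ⟨d, e, hd, he, hlt⟩
  · exact absurd (.single h) huv
  · exact Or.inr ⟨d, e, hd.of_reflGen hua hvb hvu, he.of_reflGen hvb hua huv, hlt⟩

theorem isChain_of_cofinal_cones {H B : Set α} {P : Prop}
    (hH : ∀ a ∈ H, ∀ b ∈ H, a < b → (TreeLex r a b ↔ P))
    (hB : ∀ t ∈ B, ∀ z, ∃ h ∈ H, r t h ∧ z < h) : IsChain r B := by
  intro x hx y hy hxy
  by_contra! hinc
  wlog hlex : TreeLex r x y generalizing x y
  · exact this hy hx hxy.symm ⟨hinc.2, hinc.1⟩ ((TreeLex.total hxy).resolve_left hlex)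
  have hxy' : ¬ ReflGen r x y := by rintro (_ | h); exacts [hxy rfl, hinc.1 h]
  have hyx' : ¬ ReflGen r y x := by rintro (_ | h); exacts [hxy rfl, hinc.2 h]
  obtain ⟨a, haH, hya, -⟩ := hB y hy y
  obtain ⟨b, hbH, hxb, hab⟩ := hB x hx a
  obtain ⟨a', ha'H, hxa', -⟩ := hB x hx x
  obtain ⟨b', hb'H, hyb', hab'⟩ := hB y hy a'
  have hP : P := (hH a' ha'H b' hb'H hab').1
    (hlex.of_reflGen (.single hxa') (.single hyb') hxy' hyx')
  exact (hlex.of_reflGen (.single hxb) (.single hya) hxy' hyx').asymm ((hH a haH b hbH hab).2 hP)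

end Lex

variable (r) in
def height (t : α) : Ordinal :=
  Ordinal.type (fun a b : {s // r s t} => r a.1 b.1)

theorem exists_lt_height_eq {t : α} {o : Ordinal} (ho : o < height r t) :
    ∃ s, r s t ∧ height r s = o := by
  let R := fun a b : {s // r s t} => r a.1 b.1
  set s := Ordinal.enum R ⟨o, ho⟩
  have iso : (fun a b : {q // r q s.1} => r a.1 b.1) ≃r Subrel R (R · s) :=
    { toFun := fun q => ⟨⟨q.1, _root_.trans q.2 s.2⟩, q.2⟩
      invFun := fun p => ⟨p.1.1, p.2⟩
      left_inv := fun _ => rfl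
      right_inv := fun _ => rfl
      map_rel_iff' := Iff.rfl }
  exact ⟨s.1, s.2, (Ordinal.type_eq.2 ⟨iso⟩).trans (Ordinal.typein_enum R _)⟩

theorem exists_height_eq_le_mk_sep {κ : Cardinal.{u}} (hκ : κ.IsRegular) (hlevel : ∀ β < κ.ord, #{t | height r t = β} < κ)
    {H : Set α} (hH : κ ≤ #H) {o : Ordinal} (ho : o < κ.ord) :
    ∃ t, height r t = o ∧ κ ≤ #{h ∈ H | r t h} := by
  have hlow : #{t | height r t ≤ o} < κ := mk_preimage_Iic_lt_of_isRegular hκ hlevel ho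
  have hhigh : κ ≤ #(H \ {t | height r t ≤ o} : Set α) := le_mk_diff_of_mk_lt hκ.aleph0_le hH hlow
  have hpred (h : ↥(H \ {t | height r t ≤ o})) : ∃ t : {t | height r t = o}, r t h := by
    obtain ⟨s, hs, hso⟩ := exists_lt_height_eq (not_le.1 h.2.2)
    exact ⟨⟨s, hso⟩, hs⟩
  choose g hg using hpred
  obtain ⟨t, C, hCH, hC, hCt⟩ := infinite_pigeonhole_set g κ hhigh hκ.aleph0_le
    (by rw [hκ.cof_ord]; exact hlevel o ho)
  exact ⟨t, t.2, hC.trans (mk_le_mk_of_subset fun h hh => ⟨(hCH hh).1, hCt hh ▸ hg _⟩)⟩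

end IsTreeOrder

theorem definable_tree_property_of_partition_general (κ : Cardinal)
    (hreg : κ.IsRegular) (hκ : Cardinal.aleph0 < κ)
    (hpart : ∀ F : κ.ord.ToType → κ.ord.ToType → Fin 2,
      ∃ (H : Set κ.ord.ToType) (c : Fin 2),
        Cardinal.mk H = κ ∧ ∀ a ∈ H, ∀ b ∈ H, a < b → F a b = c)
    (ltT : κ.ord.ToType → κ.ord.ToType → Prop)
    (hirr : ∀ x, ¬ ltT x x)
    (htrans : ∀ x y z, ltT x y → ltT y z → ltT x z)
    (hwo : ∀ t : κ.ord.ToType,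
      IsWellOrder {s : κ.ord.ToType // ltT s t} (fun a b => ltT a.1 b.1))
    (level : Ordinal → Set κ.ord.ToType)
    (hlevel : ∀ (α : Ordinal) (t : κ.ord.ToType), t ∈ level α ↔
      @Ordinal.type {s : κ.ord.ToType // ltT s t} (fun a b => ltT a.1 b.1) (hwo t) = α)
    (hsmall : ∀ α < κ.ord, Cardinal.mk (level α) < κ) :
    ∃ B : Set κ.ord.ToType,
      (∀ x ∈ B, ∀ y ∈ B, x ≠ y → ltT x y ∨ ltT y x) ∧
      ∀ α < κ.ord, ∃ t ∈ B, t ∈ level α := by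
  classical
  have : IsTreeOrder κ.ord.ToType ltT := { irrefl := hirr, trans := htrans, wellOrder_Iio := hwo }
  obtain ⟨H, c, hHκ, hHc⟩ := hpart fun a b => if IsTreeOrder.TreeLex ltT a b then 0 else 1
  have hlevel_eq (α : Ordinal) : level α = {t | IsTreeOrder.height ltT t = α} :=
    Set.ext (hlevel α)
  refine ⟨{t | κ ≤ #{h ∈ H | ltT t h}}, ?_, fun α hα => ?_⟩
  · refine IsTreeOrder.isChain_of_cofinal_cones (H := H) (P := c = 0) (fun a ha b hb hab => ?_)
      fun t ht z => ?_
    · rw [← hHc a ha b hb hab]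
      split_ifs with h <;> simp [h]
    · obtain ⟨h, ⟨hH, hth⟩, hz⟩ := exists_gt_of_le_mk hκ.le ht z
      exact ⟨h, hH, hth, hz⟩
  · obtain ⟨t, ht, hcone⟩ := IsTreeOrder.exists_height_eq_le_mk_sep hreg
      (fun β hβ => hlevel_eq β ▸ hsmall β hβ) hHκ.ge hα
    exact ⟨t, hcone, (hlevel α t).2 ht⟩

/-- If `κ` is a regular uncountable cardinal with the partition property
`κ → (κ)²₂`, then every `κ`-tree (a tree order on the ordinals below `κ` all
of whose levels are nonempty and of cardinality `< κ`) has a cofinal branch. -/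
theorem definable_tree_property_of_partition (κ : Cardinal)
    (hreg : κ.IsRegular) (hκ : Cardinal.aleph0 < κ)
    (hpart : ∀ F : κ.ord.ToType → κ.ord.ToType → Fin 2,
      ∃ (H : Set κ.ord.ToType) (c : Fin 2),
        Cardinal.mk H = κ ∧ ∀ a ∈ H, ∀ b ∈ H, a < b → F a b = c)
    (ltT : κ.ord.ToType → κ.ord.ToType → Prop)
    (hirr : ∀ x, ¬ ltT x x)
    (htrans : ∀ x y z, ltT x y → ltT y z → ltT x z)
    (hwo : ∀ t : κ.ord.ToType,
      IsWellOrder {s : κ.ord.ToType // ltT s t} (fun a b => ltT a.1 b.1))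
    (level : Ordinal → Set κ.ord.ToType)
    (hlevel : ∀ (α : Ordinal) (t : κ.ord.ToType), t ∈ level α ↔
      @Ordinal.type {s : κ.ord.ToType // ltT s t} (fun a b => ltT a.1 b.1) (hwo t) = α)
    (hsmall : ∀ α < κ.ord, Cardinal.mk (level α) < κ)
    (hne : ∀ α < κ.ord, (level α).Nonempty) :
    ∃ B : Set κ.ord.ToType,
      (∀ x ∈ B, ∀ y ∈ B, x ≠ y → ltT x y ∨ ltT y x) ∧
      ∀ α < κ.ord, ∃ t ∈ B, t ∈ level α :=
  definable_tree_property_of_partition_general κ hreg hκ hpart ltT hirr htrans hwo level hlevel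
    hsmall
end

section
/- Let <_T be a partial order on the set of ordinals below ω₁ such that for every t < ω₁ the set of <_T-predecessors of t is well-ordered by <_T. Then there exists a strict linear order ≺ on the ordinals below ω₁ such that: (i) if s <_T t then s ≺ t; and (ii) whenever x and y are <_T-incomparable with x ≺ y, and x ≤_T α and y ≤_T β (where s ≤_T t means s = t or s <_T t), then α ≺ β. -/
/-!
For `<_T`-incomparable `a` and `b`, let `u` be the `<_T`-least element below `a` that is not
below `b`, and `v` the least one below `b` not below `a`. Then `u ≠ v` have the same strict
`<_T`-predecessors, and we put `a ≺ b` iff `u < v` in the ordinal order. Phrased as "some pair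
of distinct siblings `u ≤_T a`, `v ≤_T b` has `u < v`", the cone property is immediate, and
transitivity reduces to comparing two elements lying below the same node.
-/

open Relation

section

variable {α : Type*} {r : α → α → Prop}

theorem wellFounded_of_wellFounded_predecessors [IsTrans α r]
    (hwf : ∀ t, WellFounded fun a b : {s // r s t} => r a.1 b.1) : WellFounded r := by
  refine ⟨fun t => ⟨t, fun s hst => ?_⟩⟩
  suffices ∀ x : {s // r s t}, Acc r x.1 from this ⟨s, hst⟩
  intro x
  induction x using (hwf t).induction with
  | _ x ih => exact ⟨x.1, fun s hsx => ih ⟨s, _root_.trans hsx x.2⟩ hsx⟩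

theorem rel_of_rel_of_reflGen [IsTrans α r] {a b c : α} (hab : r a b) (hbc : ReflGen r b c) :
    r a c := by
  cases hbc with
  | refl => exact hab
  | single hbc => exact _root_.trans hab hbc

theorem trichotomous_of_reflGen_of_reflGen (hchain : ∀ t, IsChain r {s | r s t}) {s s' t : α}
    (hs : ReflGen r s t) (hs' : ReflGen r s' t) : r s s' ∨ s = s' ∨ r s' s := by
  cases hs with
  | refl => cases hs' with
    | refl => exact Or.inr (Or.inl rfl)
    | single hs' => exact Or.inr (Or.inr hs')
  | single hs => cases hs' with
    | refl => exact Or.inl hs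
    | single hs' =>
      by_cases hne : s = s'
      · exact Or.inr (Or.inl hne)
      · exact (hchain t hs hs' hne).imp_right Or.inr

variable (r) in
def Siblings (u v : α) : Prop :=
  ∀ s, r s u ↔ r s v

theorem Siblings.symm {u v : α} (h : Siblings r u v) : Siblings r v u :=
  fun s => (h s).symm

theorem Siblings.trans {u v w : α} (huv : Siblings r u v) (hvw : Siblings r v w) :
    Siblings r u w :=
  fun s => (huv s).trans (hvw s)

theorem Siblings.not_rel [Std.Irrefl r] {u v : α} (h : Siblings r u v) : ¬ r u v :=
  fun huv => irrefl u ((h u).2 huv)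

theorem rel_of_rel_of_minimal [IsTrans α r] (hchain : ∀ t, IsChain r {s | r s t})
    {a b u v s : α} (hua : ReflGen r u a) (hmin : ∀ s, r s u → ReflGen r s b)
    (hvb : ReflGen r v b) (hva : ¬ ReflGen r v a) (hsu : r s u) : r s v := by
  have hsa : r s a := rel_of_rel_of_reflGen hsu hua
  rcases trichotomous_of_reflGen_of_reflGen hchain (hmin s hsu) hvb with hsv | rfl | hvs
  · exact hsv
  · exact absurd (.single hsa) hva
  · exact absurd (.single (_root_.trans hvs hsa)) hva

theorem exists_siblings_of_incomparable [IsTrans α r] (hchain : ∀ t, IsChain r {s | r s t})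
    (hwf : WellFounded r) {a b : α} (hab : ¬ ReflGen r a b) (hba : ¬ ReflGen r b a) :
    ∃ u v, ReflGen r u a ∧ ReflGen r v b ∧ u ≠ v ∧ Siblings r u v := by
  have hmin : ∀ a b, ¬ ReflGen r a b → ∃ u, ReflGen r u a ∧ ¬ ReflGen r u b ∧
      ∀ s, r s u → ReflGen r s b := by
    intro a b hab
    obtain ⟨u, ⟨hua, hub⟩, hu⟩ :=
      hwf.has_min {s | ReflGen r s a ∧ ¬ ReflGen r s b} ⟨a, .refl, hab⟩
    refine ⟨u, hua, hub, fun s hsu => ?_⟩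
    by_contra hsb
    exact hu s ⟨.single (rel_of_rel_of_reflGen hsu hua), hsb⟩ hsu
  obtain ⟨u, hua, hub, hu⟩ := hmin a b hab
  obtain ⟨v, hvb, hva, hv⟩ := hmin b a hba
  refine ⟨u, v, hua, hvb, fun huv => hub (huv ▸ hvb), fun s => ⟨?_, ?_⟩⟩
  · exact rel_of_rel_of_minimal hchain hua hu hvb hva
  · exact rel_of_rel_of_minimal hchain hvb hv hua hub

variable (r) in
def TreeLex [LT α] (a b : α) : Prop :=
  r a b ∨ ∃ u v, ReflGen r u a ∧ ReflGen r v b ∧ u < v ∧ Siblings r u v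

namespace TreeLex

theorem irrefl [Std.Irrefl r] [Preorder α] (hchain : ∀ t, IsChain r {s | r s t}) (a : α) :
    ¬ TreeLex r a a := by
  rintro (haa | ⟨u, v, hu, hv, huv, hsib⟩)
  · exact _root_.irrefl a haa
  · rcases trichotomous_of_reflGen_of_reflGen hchain hu hv with h | rfl | h
    · exact hsib.not_rel h
    · exact lt_irrefl u huv
    · exact hsib.symm.not_rel h

theorem trans [IsStrictOrder α r] [Preorder α] (hchain : ∀ t, IsChain r {s | r s t})
    {a b c : α} (hab : TreeLex r a b) (hbc : TreeLex r b c) : TreeLex r a c := by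
  rcases hab with hab | ⟨u, v, hua, hvb, huv, hsib⟩ <;>
    rcases hbc with hbc | ⟨u', v', hu'b, hv'c, hu'v', hsib'⟩
  · exact Or.inl (_root_.trans hab hbc)
  · rcases trichotomous_of_reflGen_of_reflGen hchain (.single hab) hu'b with hau' | rfl | hu'a
    · exact Or.inl (rel_of_rel_of_reflGen ((hsib' a).1 hau') hv'c)
    · exact Or.inr ⟨a, v', .refl, hv'c, hu'v', hsib'⟩
    · exact Or.inr ⟨u', v', .single hu'a, hv'c, hu'v', hsib'⟩
  · exact Or.inr ⟨u, v, hua, _root_.trans hvb (.single hbc), huv, hsib⟩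
  · rcases trichotomous_of_reflGen_of_reflGen hchain hvb hu'b with hvu' | rfl | hu'v
    · exact Or.inr ⟨u, v, hua, .single (rel_of_rel_of_reflGen ((hsib' v).1 hvu') hv'c), huv,
        hsib⟩
    · exact Or.inr ⟨u, v', hua, hv'c, huv.trans hu'v', hsib.trans hsib'⟩
    · exact Or.inr ⟨u', v', .single (rel_of_rel_of_reflGen ((hsib u').2 hu'v) hua), hv'c,
        hu'v', hsib'⟩

theorem total [IsStrictOrder α r] [LinearOrder α] (hchain : ∀ t, IsChain r {s | r s t})
    (hwf : WellFounded r) {a b : α} (hne : a ≠ b) : TreeLex r a b ∨ TreeLex r b a := by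
  by_cases hab : r a b
  · exact Or.inl (Or.inl hab)
  by_cases hba : r b a
  · exact Or.inr (Or.inl hba)
  have hab' : ¬ ReflGen r a b := by
    rintro (_ | hab'); exacts [hne rfl, hab hab']
  have hba' : ¬ ReflGen r b a := by
    rintro (_ | hba'); exacts [hne rfl, hba hba']
  obtain ⟨u, v, hua, hvb, huv, hsib⟩ := exists_siblings_of_incomparable hchain hwf hab' hba'
  rcases huv.lt_or_gt with huv | hvu
  · exact Or.inl (Or.inr ⟨u, v, hua, hvb, huv, hsib⟩)
  · exact Or.inr (Or.inr ⟨v, u, hvb, hua, hvu, hsib.symm⟩)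

theorem of_reflGen [IsTrans α r] [LT α] {x y a b : α} (h : TreeLex r x y) (hxy : ¬ r x y)
    (hxa : ReflGen r x a) (hyb : ReflGen r y b) : TreeLex r a b := by
  obtain ⟨u, v, hux, hvy, huv, hsib⟩ := h.resolve_left hxy
  exact Or.inr ⟨u, v, _root_.trans hux hxa, _root_.trans hvy hyb, huv, hsib⟩

end TreeLex

end

/-- Any tree order `<_T` on the countable ordinals extends to a strict linear
order `≺` such that, whenever `x ≺ y` are `<_T`-incomparable, any `α` above
`x` and `β` above `y` (in the order `≤_T`) satisfy `α ≺ β`. -/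
theorem lex_extension_of_tree_order
    (ltT : (Cardinal.aleph 1).ord.ToType → (Cardinal.aleph 1).ord.ToType → Prop)
    (hirr : ∀ x, ¬ ltT x x)
    (htrans : ∀ x y z, ltT x y → ltT y z → ltT x z)
    (hwo : ∀ t : (Cardinal.aleph 1).ord.ToType,
      IsWellOrder {s : (Cardinal.aleph 1).ord.ToType // ltT s t}
        (fun a b => ltT a.1 b.1)) :
    ∃ prec : (Cardinal.aleph 1).ord.ToType → (Cardinal.aleph 1).ord.ToType → Prop,
      (∀ x, ¬ prec x x) ∧
      (∀ x y z, prec x y → prec y z → prec x z) ∧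
      (∀ x y, x ≠ y → prec x y ∨ prec y x) ∧
      (∀ s t, ltT s t → prec s t) ∧
      (∀ x y α β, ¬ (x = y ∨ ltT x y) → ¬ (y = x ∨ ltT y x) → prec x y →
        (x = α ∨ ltT x α) → (y = β ∨ ltT y β) → prec α β) := by
  have : IsStrictOrder _ ltT := { irrefl := hirr, trans := htrans }
  have hchain : ∀ t, IsChain ltT {s | ltT s t} := by
    intro t s hs s' hs' hne
    rcases @trichotomous_of _ _ (hwo t).toTrichotomous ⟨s, hs⟩ ⟨s', hs'⟩ with h | h | h
    · exact Or.inl h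
    · exact absurd (congrArg Subtype.val h) hne
    · exact Or.inr h
  have hwf := wellFounded_of_wellFounded_predecessors fun t => (hwo t).wf
  have reflGen_of_eq_or : ∀ {a b}, a = b ∨ ltT a b → ReflGen ltT a b := by
    rintro a b (rfl | h); exacts [.refl, .single h]
  refine ⟨TreeLex ltT, TreeLex.irrefl hchain, fun _ _ _ => TreeLex.trans hchain,
    fun _ _ => TreeLex.total hchain hwf, fun _ _ => Or.inl, ?_⟩
  intro x y α β hxy _ hprec hxα hyβ
  exact hprec.of_reflGen (fun h => hxy (Or.inr h)) (reflGen_of_eq_or hxα) (reflGen_of_eq_or hyβ)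
end
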